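/- If the constraint C of a symbolic state implies TL > ub_t(en_s) for every symbolic tuple (en_s, t) of a transition t, then no numerical substitution satisfying C yields a firing time τ with max(TL_value, lb_t(en)) ≤ τ ≤ ub_t(en); i.e., t is disabled in every ordinary marking represented by the state (under the constraint that firings cannot occur before time TL). -/
import Mathlib

/-- Heuristic 4: if the constraint implies `TL > ub_t(en_s)` for
every symbolic tuple of `t`, then no satisfying substitution yields a firing
time `τ` with `max(TL, lb_t(en)) ≤ τ ≤ ub_t(en)`: `t` is disabled in every
represented ordinary marking. -/
theorem stmt13 {k : ℕ} {ι : Type*} (C : (Fin k → ℝ) → ℝ → Prop)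
    (lb ub : ι → (Fin k → ℝ) → ℝ)
    (h : ∀ (e : ι) (σ : Fin k → ℝ) (TL : ℝ), C σ TL → ub e σ < TL) :
    ∀ e : ι, ¬ ∃ (σ : Fin k → ℝ) (TL τ : ℝ),
      C σ TL ∧ max TL (lb e σ) ≤ τ ∧ τ ≤ ub e σ := by
  rintro e ⟨σ, TL, τ, hC, h1, h2⟩
  exact absurd (le_trans (le_max_left _ _) (h1.trans h2)) (not_le.mpr (h e σ TL hC))
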